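/- Let W ⊆ V be a subspace with inclusion ι : W ↪ V, and for a subspace D ⊆ V ⊕ V* define its pullback ι*D := {(X, ξ∘ι) ∈ W ⊕ W* : (X, ξ) ∈ D and X ∈ W}. Let S := {0} ⊕ W° and D^S := (D ∩ S^⊥) + S. Then ι*(D^S) = ι*D. -/
import Mathlib


/-- The canonical symmetric pairing on `V ⊕ V*`:
`⟨(X,ξ),(Y,η)⟩ = ½ (ξ(Y) + η(X))`. -/
noncomputable def pairVD (V : Type*) [AddCommGroup V] [Module ℝ V] :
    (V × Module.Dual ℝ V) →ₗ[ℝ] (V × Module.Dual ℝ V) →ₗ[ℝ] ℝ :=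
  LinearMap.mk₂ ℝ (fun p q => (p.2 q.1 + q.2 p.1) / 2)
    (by intro m m' n; simp; ring)
    (by intro c m n; simp; ring)
    (by intro m n n'; simp; ring)
    (by intro c m n; simp; ring)

/-- The orthogonal of a subspace of `V ⊕ V*` with respect to the canonical pairing. -/
noncomputable def perpVD {V : Type*} [AddCommGroup V] [Module ℝ V]
    (A : Submodule ℝ (V × Module.Dual ℝ V)) : Submodule ℝ (V × Module.Dual ℝ V) where
  carrier := {e | ∀ a ∈ A, pairVD V e a = 0}
  add_mem' := by
    intro x y hx hy a ha
    simp only [Set.mem_setOf_eq] at *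
    rw [map_add, LinearMap.add_apply, hx a ha, hy a ha, add_zero]
  zero_mem' := by
    intro a ha
    simp
  smul_mem' := by
    intro c x hx a ha
    simp only [Set.mem_setOf_eq] at *
    rw [map_smul, LinearMap.smul_apply, hx a ha, smul_zero]

/-- The pullback of a subspace `D ⊆ V ⊕ V*` to a subspace `W ⊆ V`:
`ι*D := {(X, ξ∘ι) ∈ W ⊕ W* : (X, ξ) ∈ D, X ∈ W}` where `ι : W ↪ V` is the inclusion. -/
def pullbackVD {V : Type*} [AddCommGroup V] [Module ℝ V]
    (W : Submodule ℝ V) (D : Submodule ℝ (V × Module.Dual ℝ V)) :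
    Set (W × Module.Dual ℝ W) :=
  {p | ∃ ξ : Module.Dual ℝ V, ((p.1 : V), ξ) ∈ D ∧ p.2 = ξ.comp W.subtype}

/-- Let `W ⊆ V` be a subspace, `S := {0} ⊕ W°` and
`D^S := (D ∩ S^⊥) + S`. Then `ι*(D^S) = ι*D`. -/
theorem pullback_of_stretching_eq_pullback
    {V : Type*} [AddCommGroup V] [Module ℝ V] [FiniteDimensional ℝ V]
    (W : Submodule ℝ V) (D : Submodule ℝ (V × Module.Dual ℝ V)) :
    pullbackVD W
        ((D ⊓ perpVD ((⊥ : Submodule ℝ V).prod W.dualAnnihilator)) ⊔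
          (⊥ : Submodule ℝ V).prod W.dualAnnihilator) =
      pullbackVD W D := by
  ext p
  constructor
  · rintro ⟨ξ, hmem, hp2⟩
    rw [Submodule.mem_sup] at hmem
    obtain ⟨y, ⟨hyD, -⟩, z, hz, hsum⟩ := hmem
    rw [Submodule.mem_prod] at hz
    obtain ⟨hz1, hz2⟩ := hz
    have hz1' : z.1 = 0 := hz1
    have h1 : y.1 = (p.1 : V) := by
      have := congrArg Prod.fst hsum
      simpa [hz1'] using this
    have h2 : y.2 + z.2 = ξ := congrArg Prod.snd hsum
    refine ⟨y.2, by rw [← h1]; exact hyD, ?_⟩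
    rw [hp2, ← h2]
    ext w
    simp [(Submodule.mem_dualAnnihilator z.2).mp hz2 w w.2]
  · rintro ⟨ξ, hD, hp2⟩
    refine ⟨ξ, Submodule.mem_sup_left ⟨hD, ?_⟩, hp2⟩
    rintro ⟨a1, a2⟩ ha
    rw [Submodule.mem_prod] at ha
    have ha1 : a1 = 0 := ha.1
    simp [pairVD, ha1, (Submodule.mem_dualAnnihilator a2).mp ha.2 p.1 p.1.2]
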